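/- Let G = (V,E) be a finite simple undirected graph, let T be a hierarchical-decomposition tree of G given by a laminar family 𝓕, and let α ≥ 1. Suppose that for every finite commodity set K and every valid demand state P : V×K → ℝ the following implication holds: if for every subset U ⊆ 𝓕 with U and 𝓕∖U nonempty one has cap_T(U, 𝓕∖U) ≥ Σ_{k∈K} |Σ_{u∈V with {u}∈U} P(u,k)| (i.e., T 1-respects P), then for every cut (S, V∖S) of G one has cap_G(S, V∖S) ≥ (1/α)·dem_P(S, V∖S) (i.e., G (1/α)-respects P). Then T is a cut-sparsifier of G of quality α, i.e., for every nonempty proper S ⊆ V, cap_G(S, V∖S) ≤ mincut_T(S, V∖S) ≤ α·cap_G(S, V∖S). -/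

import Mathlib

open Finset

/- `capG G A B` is the number of edges of `G` with one endpoint in `A` and
the other in `B` (for disjoint `A`, `B`), as a real number. -/
open Classical in
noncomputable def capG {V : Type} [Fintype V] (G : SimpleGraph V) (A B : Finset V) : ℝ :=
  ∑ u ∈ A, ∑ v ∈ B, if G.Adj u v then (1 : ℝ) else 0

/- `capT G F Pa U` : total weight of the edges of the hierarchical-decomposition
tree (vertex set `F`, edges `{S, Pa S}` for `S ∈ F`, `S ≠ univ`, with weight
`capG G S Sᶜ`) crossing the cut `(U, F \ U)`. -/
open Classical in
noncomputable def capT {V : Type} [Fintype V] [DecidableEq V] (G : SimpleGraph V)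
    (F : Finset (Finset V)) (Pa : Finset V → Finset V) (U : Finset (Finset V)) : ℝ :=
  ∑ S ∈ F.filter (fun S => S ≠ Finset.univ),
    if (S ∈ U) ↔ (Pa S ∈ U) then 0 else capG G S Sᶜ

set_option linter.unusedSectionVars false

section Aux
variable {V : Type} [Fintype V] [DecidableEq V]

lemma capG_nonneg (G : SimpleGraph V) (A B : Finset V) : 0 ≤ capG G A B := by
  classical
  apply Finset.sum_nonneg; intro u _; apply Finset.sum_nonneg; intro v _
  split <;> norm_num

open Classical in
lemma capG_eq_card (G : SimpleGraph V) (A B : Finset V) :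
    capG G A B = (((A ×ˢ B).filter (fun p => G.Adj p.1 p.2)).card : ℝ) := by
  classical
  rw [Finset.card_filter]
  push_cast
  rw [capG, Finset.sum_product]

lemma capT_nonneg (G : SimpleGraph V) (F : Finset (Finset V)) (Pa : Finset V → Finset V)
    (U : Finset (Finset V)) : 0 ≤ capT G F Pa U := by
  classical
  apply Finset.sum_nonneg; intro R _
  split
  · exact le_refl 0
  · exact capG_nonneg G R Rᶜ

end Aux


section Aux
variable {V : Type} [Fintype V] [DecidableEq V]

lemma exists_crossing (F : Finset (Finset V)) (Pa : Finset V → Finset V)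
    (hlam : ∀ A ∈ F, ∀ B ∈ F, A ⊆ B ∨ B ⊆ A ∨ Disjoint A B)
    (huniv : Finset.univ ∈ F)
    (hsing : ∀ v : V, ({v} : Finset V) ∈ F)
    (hPa : ∀ S ∈ F, S ≠ Finset.univ → Pa S ∈ F ∧ S ⊂ Pa S ∧ ∀ R ∈ F, S ⊂ R → Pa S ⊆ R)
    (U : Finset (Finset V)) (x y : V)
    (hx : ({x} : Finset V) ∈ U) (hy : ({y} : Finset V) ∉ U) :
    ∃ R ∈ F, R ≠ Finset.univ ∧ ¬((R ∈ U) ↔ (Pa R ∈ U)) ∧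
      ((x ∈ R ∧ y ∉ R) ∨ (y ∈ R ∧ x ∉ R)) := by
  have hxy : x ≠ y := by rintro rfl; exact hy hx
  by_contra hcon
  push_neg at hcon
  have H' : ∀ R ∈ F, R ≠ Finset.univ → ((x ∈ R ∧ y ∉ R) ∨ (y ∈ R ∧ x ∉ R)) →
      ((R ∈ U) ↔ (Pa R ∈ U)) := by
    intro R hF hn hsep
    by_contra hniff
    have h2 := hcon R hF hn (by tauto)
    rcases hsep with ⟨ha, hb⟩ | ⟨ha, hb⟩
    · exact hb (h2.1 ha)
    · exact hb (h2.2 ha)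
  classical
  obtain ⟨M, hM, hMmin⟩ := Finset.exists_min_image
    (F.filter (fun R => x ∈ R ∧ y ∈ R)) Finset.card
    ⟨Finset.univ, by simp [huniv]⟩
  rw [Finset.mem_filter] at hM
  obtain ⟨hMF, hxM, hyM⟩ := hM
  have key : ∀ n : ℕ, ∀ A, A ∈ F → ((x ∈ A ∧ y ∉ A) ∨ (y ∈ A ∧ x ∉ A)) → A ⊆ M →
      M.card - A.card ≤ n → ((A ∈ U) ↔ (M ∈ U)) := by
    intro n
    induction n with
    | zero =>
      intro A hAF hsep hAM hcard
      have : A = M := Finset.eq_of_subset_of_card_le hAM (by omega)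
      subst this
      rcases hsep with ⟨_, h⟩ | ⟨_, h⟩ <;> [exact absurd hyM h; exact absurd hxM h]
    | succ n ih =>
      intro A hAF hsep hAM hcard
      have hAuniv : A ≠ Finset.univ := by
        rintro rfl
        rcases hsep with ⟨_, h⟩ | ⟨_, h⟩ <;> simp at h
      obtain ⟨hPaF, hss, hminP⟩ := hPa A hAF hAuniv
      have hAne : A ≠ M := by
        rintro rfl
        rcases hsep with ⟨_, h⟩ | ⟨_, h⟩ <;> [exact h hyM; exact h hxM]
      have hAssM : A ⊂ M := ssubset_of_subset_of_ne hAM hAne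
      have hPaM : Pa A ⊆ M := hminP M hMF hAssM
      by_cases hboth : x ∈ Pa A ∧ y ∈ Pa A
      · have : Pa A = M := by
          apply Finset.eq_of_subset_of_card_le hPaM
          exact hMmin (Pa A) (Finset.mem_filter.mpr ⟨hPaF, hboth⟩)
        rw [← this]
        exact H' A hAF hAuniv hsep
      · have hsub : A ⊆ Pa A := hss.subset
        have hsep' : (x ∈ Pa A ∧ y ∉ Pa A) ∨ (y ∈ Pa A ∧ x ∉ Pa A) := by
          rcases hsep with ⟨hxa, hya⟩ | ⟨hya, hxa⟩
          · exact Or.inl ⟨hsub hxa, fun hy' => hboth ⟨hsub hxa, hy'⟩⟩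
          · exact Or.inr ⟨hsub hya, fun hx' => hboth ⟨hx', hsub hya⟩⟩
        have hcard' : M.card - (Pa A).card ≤ n := by
          have h1 : A.card < (Pa A).card := Finset.card_lt_card hss
          have h2 : (Pa A).card ≤ M.card := Finset.card_le_card hPaM
          omega
        rw [H' A hAF hAuniv hsep]
        exact ih (Pa A) hPaF hsep' hPaM hcard'
  have k1 : (({x} : Finset V) ∈ U) ↔ (M ∈ U) :=
    key M.card {x} (hsing x) (Or.inl ⟨Finset.mem_singleton_self x, by
      simp only [Finset.mem_singleton]; exact fun h => hxy h.symm⟩)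
      (Finset.singleton_subset_iff.mpr hxM) (by omega)
  have k2 : (({y} : Finset V) ∈ U) ↔ (M ∈ U) :=
    key M.card {y} (hsing y) (Or.inr ⟨Finset.mem_singleton_self y, by
      simp only [Finset.mem_singleton]; exact fun h => hxy h⟩)
      (Finset.singleton_subset_iff.mpr hyM) (by omega)
  exact hy (k2.mpr (k1.mp hx))
end Aux

section Part1
variable {V : Type} [Fintype V] [DecidableEq V]

open Classical in
lemma capG_le_capT (G : SimpleGraph V) (F : Finset (Finset V)) (Pa : Finset V → Finset V)
    (hlam : ∀ A ∈ F, ∀ B ∈ F, A ⊆ B ∨ B ⊆ A ∨ Disjoint A B)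
    (huniv : Finset.univ ∈ F)
    (hsing : ∀ v : V, ({v} : Finset V) ∈ F)
    (hPa : ∀ S ∈ F, S ≠ Finset.univ → Pa S ∈ F ∧ S ⊂ Pa S ∧ ∀ R ∈ F, S ⊂ R → Pa S ⊆ R)
    (S : Finset V) (U : Finset (Finset V))
    (hin : ∀ v ∈ S, ({v} : Finset V) ∈ U) (hout : ∀ v ∉ S, ({v} : Finset V) ∉ U) :
    capG G S Sᶜ ≤ capT G F Pa U := by
  classical
  set E : Finset V → Finset (V × V) :=
    fun A => (A ×ˢ Aᶜ).filter (fun p => G.Adj p.1 p.2) with hE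
  set C : Finset (Finset V) :=
    (F.filter (fun S => S ≠ Finset.univ)).filter (fun R => ¬((R ∈ U) ↔ (Pa R ∈ U))) with hC
  have hcapT : capT G F Pa U = ∑ R ∈ C, capG G R Rᶜ := by
    rw [hC, Finset.sum_filter, capT]
    apply Finset.sum_congr rfl
    intro R _
    by_cases h : (R ∈ U ↔ Pa R ∈ U) <;> simp [h]
  have hmemE : ∀ A : Finset V, ∀ p : V × V,
      p ∈ E A ↔ (p.1 ∈ A ∧ p.2 ∉ A ∧ G.Adj p.1 p.2) := by
    intro A p
    simp [hE, Finset.mem_filter, Finset.mem_product, and_assoc]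
  have hex : ∀ p : V × V, ∃ R : Finset V, p ∈ E S →
      R ∈ C ∧ ((p.1 ∈ R ∧ p.2 ∉ R) ∨ (p.2 ∈ R ∧ p.1 ∉ R)) := by
    intro p
    by_cases hp : p ∈ E S
    · obtain ⟨hp1, hp2, hadj⟩ := (hmemE S p).mp hp
      obtain ⟨R, hRF, hRu, hRiff, hRsep⟩ :=
        exists_crossing F Pa hlam huniv hsing hPa U p.1 p.2 (hin p.1 hp1) (hout p.2 hp2)
      exact ⟨R, fun _ => ⟨by rw [hC]; simp only [Finset.mem_filter]; exact ⟨⟨hRF, hRu⟩, hRiff⟩,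
        hRsep⟩⟩
    · exact ⟨∅, fun h => absurd h hp⟩
  choose g hg using hex
  have hinj : (E S).card ≤ (C.sigma (fun R => E R)).card := by
    apply Finset.card_le_card_of_injOn
      (fun p => (⟨g p, if p.1 ∈ g p then p else p.swap⟩ : Σ _ : Finset V, V × V))
    · intro p hp
      obtain ⟨hgC, hsep⟩ := hg p hp
      obtain ⟨hp1, hp2, hadj⟩ := (hmemE S p).mp hp
      rw [Finset.mem_coe, Finset.mem_sigma]; dsimp only
      refine ⟨hgC, ?_⟩
      split_ifs with h
      · rcases hsep with ⟨_, h2⟩ | ⟨_, h2⟩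
        · exact (hmemE (g p) p).mpr ⟨h, h2, hadj⟩
        · exact absurd h h2
      · rcases hsep with ⟨h1, _⟩ | ⟨h1, _⟩
        · exact absurd h1 h
        · exact (hmemE (g p) p.swap).mpr ⟨h1, h, hadj.symm⟩
    · intro p hp q hq hfq
      have h2 : (if p.1 ∈ g p then p else p.swap) = (if q.1 ∈ g q then q else q.swap) := by
        have := (Sigma.mk.inj_iff.mp hfq).2
        exact eq_of_heq this
      have recov : ∀ r, r ∈ E S →
          r = (fun z : V × V => if z.1 ∈ S then z else z.swap)
            (if r.1 ∈ g r then r else r.swap) := by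
        intro r hr
        obtain ⟨hr1, hr2, _⟩ := (hmemE S r).mp hr
        by_cases h : r.1 ∈ g r
        · rw [if_pos h]
          simp only
          rw [if_pos hr1]
        · rw [if_neg h]
          simp only
          rw [if_neg (show r.swap.1 ∉ S from hr2)]
          exact (Prod.swap_swap r).symm
      rw [recov p hp, recov q hq, h2]
  calc capG G S Sᶜ = ((E S).card : ℝ) := capG_eq_card G S Sᶜ
    _ ≤ ((C.sigma (fun R => E R)).card : ℝ) := Nat.cast_le.mpr hinj
    _ = capT G F Pa U := by
        rw [Finset.card_sigma, hcapT]
        push_cast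
        exact Finset.sum_congr rfl (fun R _ => (capG_eq_card G R Rᶜ).symm)
end Part1

section Identity
variable {V : Type} [Fintype V] [DecidableEq V]

lemma exists_child (F : Finset (Finset V)) (Pa : Finset V → Finset V)
    (hsing : ∀ v : V, ({v} : Finset V) ∈ F)
    (hPa : ∀ S ∈ F, S ≠ Finset.univ → Pa S ∈ F ∧ S ⊂ Pa S ∧ ∀ R ∈ F, S ⊂ R → Pa S ⊆ R)
    (Q : Finset V) (hQF : Q ∈ F) (hQ : ∀ q : V, Q ≠ {q}) (v : V) (hv : v ∈ Q) :
    ∃ R ∈ F, R ≠ Finset.univ ∧ Pa R = Q ∧ v ∈ R := by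
  classical
  have hvQ : ({v} : Finset V) ⊂ Q :=
    ssubset_of_subset_of_ne (Finset.singleton_subset_iff.mpr hv) (fun h => hQ v h.symm)
  obtain ⟨R, hR, hmax⟩ := Finset.exists_max_image
    (F.filter (fun R => v ∈ R ∧ R ⊂ Q)) Finset.card
    ⟨{v}, Finset.mem_filter.mpr ⟨hsing v, Finset.mem_singleton_self v, hvQ⟩⟩
  rw [Finset.mem_filter] at hR
  obtain ⟨hRF, hvR, hRQ⟩ := hR
  have hRuniv : R ≠ Finset.univ := by
    rintro rfl
    exact hRQ.not_subset (Finset.subset_univ Q)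
  obtain ⟨hPaF, hss, hmin⟩ := hPa R hRF hRuniv
  have hPaQ : Pa R ⊆ Q := hmin Q hQF hRQ
  refine ⟨R, hRF, hRuniv, ?_, hvR⟩
  by_contra hne
  have hPass : Pa R ⊂ Q := ssubset_of_subset_of_ne hPaQ hne
  have : (Pa R).card ≤ R.card :=
    hmax (Pa R) (Finset.mem_filter.mpr ⟨hPaF, hss.subset hvR, hPass⟩)
  exact absurd (Finset.card_lt_card hss) (by omega)

lemma children_disj (F : Finset (Finset V)) (Pa : Finset V → Finset V)
    (hlam : ∀ A ∈ F, ∀ B ∈ F, A ⊆ B ∨ B ⊆ A ∨ Disjoint A B)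
    (hPa : ∀ S ∈ F, S ≠ Finset.univ → Pa S ∈ F ∧ S ⊂ Pa S ∧ ∀ R ∈ F, S ⊂ R → Pa S ⊆ R)
    (Q : Finset V) (R1 R2 : Finset V) (h1 : R1 ∈ F) (h1u : R1 ≠ Finset.univ)
    (h1p : Pa R1 = Q) (h2 : R2 ∈ F) (h2u : R2 ≠ Finset.univ) (h2p : Pa R2 = Q)
    (hne12 : R1 ≠ R2) : Disjoint R1 R2 := by
  have key : ∀ A B : Finset V, A ∈ F → A ≠ Finset.univ → Pa A = Q → B ∈ F →
      B ≠ Finset.univ → Pa B = Q → A ≠ B → ¬ A ⊆ B := by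
    intro A B hA hAu hAp hB hBu hBp hAB hsub
    obtain ⟨_, hssA, hminA⟩ := hPa A hA hAu
    obtain ⟨_, hssB, _⟩ := hPa B hB hBu
    have : Pa A ⊆ B := hminA B hB (ssubset_of_subset_of_ne hsub hAB)
    rw [hAp] at this
    rw [hBp] at hssB
    exact hssB.not_subset this
  rcases hlam R1 h1 R2 h2 with h | h | h
  · exact absurd h (key R1 R2 h1 h1u h1p h2 h2u h2p hne12)
  · exact absurd h (key R2 R1 h2 h2u h2p h1 h1u h1p hne12.symm)
  · exact h

lemma sum_children (F : Finset (Finset V)) (Pa : Finset V → Finset V)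
    (hlam : ∀ A ∈ F, ∀ B ∈ F, A ⊆ B ∨ B ⊆ A ∨ Disjoint A B)
    (hsing : ∀ v : V, ({v} : Finset V) ∈ F)
    (hPa : ∀ S ∈ F, S ≠ Finset.univ → Pa S ∈ F ∧ S ⊂ Pa S ∧ ∀ R ∈ F, S ⊂ R → Pa S ⊆ R)
    (P : V → ℝ) (Q : Finset V) (hQF : Q ∈ F) (hQns : ∀ q : V, Q ≠ {q}) :
    ∑ R ∈ F.filter (fun R => R ≠ Finset.univ ∧ Pa R = Q), ∑ u ∈ R, P u
      = ∑ u ∈ Q, P u := by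
  classical
  set ch := F.filter (fun R => R ≠ Finset.univ ∧ Pa R = Q) with hch
  have hcov : ch.biUnion id = Q := by
    ext v
    simp only [Finset.mem_biUnion, hch, Finset.mem_filter, id]
    constructor
    · rintro ⟨R, ⟨hRF, hRu, hRp⟩, hvR⟩
      have := (hPa R hRF hRu).2.1
      rw [hRp] at this
      exact this.subset hvR
    · intro hv
      obtain ⟨R, hRF, hRu, hRp, hvR⟩ := exists_child F Pa hsing hPa Q hQF hQns v hv
      exact ⟨R, ⟨hRF, hRu, hRp⟩, hvR⟩
  have hdisj : (ch : Set (Finset V)).PairwiseDisjoint id := by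
    intro R1 hR1 R2 hR2 hne12
    simp only [hch, Finset.coe_filter, Set.mem_setOf_eq] at hR1 hR2
    exact children_disj F Pa hlam hPa Q R1 R2 hR1.1 hR1.2.1 hR1.2.2
      hR2.1 hR2.2.1 hR2.2.2 hne12
  rw [← hcov, Finset.sum_biUnion hdisj]
  rfl
end Identity

section Ident2
variable {V : Type} [Fintype V] [DecidableEq V]

lemma sum_identity (F : Finset (Finset V)) (Pa : Finset V → Finset V)
    (hne : ∀ A ∈ F, A.Nonempty)
    (hlam : ∀ A ∈ F, ∀ B ∈ F, A ⊆ B ∨ B ⊆ A ∨ Disjoint A B)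
    (hsing : ∀ v : V, ({v} : Finset V) ∈ F)
    (hPa : ∀ S ∈ F, S ≠ Finset.univ → Pa S ∈ F ∧ S ⊂ Pa S ∧ ∀ R ∈ F, S ⊂ R → Pa S ⊆ R)
    (P : V → ℝ) (hP0 : ∑ u : V, P u = 0)
    (U : Finset (Finset V)) (hU : U ⊆ F) :
    (∑ u : V, if ({u} : Finset V) ∈ U then P u else 0)
      = ∑ R ∈ F.filter (fun S => S ≠ Finset.univ),
          ((if R ∈ U then (1 : ℝ) else 0) - (if Pa R ∈ U then 1 else 0)) * (∑ u ∈ R, P u) := by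
  classical
  set F' := F.filter (fun S => S ≠ Finset.univ) with hF'
  have hstep1 : ∑ R ∈ F',
        ((if R ∈ U then (1 : ℝ) else 0) - (if Pa R ∈ U then 1 else 0)) * (∑ u ∈ R, P u)
      = (∑ R ∈ F', if R ∈ U then (∑ u ∈ R, P u) else 0)
        - (∑ R ∈ F', if Pa R ∈ U then (∑ u ∈ R, P u) else 0) := by
    rw [← Finset.sum_sub_distrib]
    apply Finset.sum_congr rfl
    intro R _
    rw [sub_mul, ite_mul, ite_mul, one_mul, zero_mul]
  have hterm1 : (∑ R ∈ F', if R ∈ U then (∑ u ∈ R, P u) else 0)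
      = ∑ Q ∈ U, ∑ u ∈ Q, P u := by
    rw [← Finset.sum_filter]
    have heq : F'.filter (fun R => R ∈ U) = U.filter (fun R => R ≠ Finset.univ) := by
      ext R
      constructor
      · intro h
        have h1 := Finset.mem_filter.mp h
        have h2 := Finset.mem_filter.mp h1.1
        exact Finset.mem_filter.mpr ⟨h1.2, h2.2⟩
      · intro h
        have h1 := Finset.mem_filter.mp h
        exact Finset.mem_filter.mpr ⟨Finset.mem_filter.mpr ⟨hU h1.1, h1.2⟩, h1.1⟩
    rw [heq, Finset.sum_filter]
    apply Finset.sum_congr rfl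
    intro Q _
    by_cases hQu : Q = Finset.univ
    · subst hQu; simp [hP0]
    · rw [if_pos hQu]
  have hterm2 : (∑ R ∈ F', if Pa R ∈ U then (∑ u ∈ R, P u) else 0)
      = ∑ Q ∈ U, ∑ R ∈ F'.filter (fun R => Pa R = Q), ∑ u ∈ R, P u := by
    rw [← Finset.sum_filter]
    rw [← Finset.sum_fiberwise_of_maps_to (g := Pa) (t := U)
      (fun R hR => (Finset.mem_filter.mp hR).2)]
    apply Finset.sum_congr rfl
    intro Q hQ
    apply Finset.sum_congr ?_ (fun _ _ => rfl)
    ext R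
    constructor
    · intro h
      have h1 := Finset.mem_filter.mp h
      exact Finset.mem_filter.mpr ⟨(Finset.mem_filter.mp h1.1).1, h1.2⟩
    · intro h
      have h1 := Finset.mem_filter.mp h
      exact Finset.mem_filter.mpr ⟨Finset.mem_filter.mpr ⟨h1.1, h1.2 ▸ hQ⟩, h1.2⟩
  have perQ : ∀ Q ∈ U, (∑ u ∈ Q, P u)
        - (∑ R ∈ F'.filter (fun R => Pa R = Q), ∑ u ∈ R, P u)
      = ∑ u : V, if Q = {u} then P u else 0 := by
    intro Q hQ
    have hQF : Q ∈ F := hU hQ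
    by_cases hQs : ∃ q : V, Q = {q}
    · obtain ⟨q, rfl⟩ := hQs
      have hch : F'.filter (fun R => Pa R = ({q} : Finset V)) = ∅ := by
        rw [Finset.eq_empty_iff_forall_notMem]
        intro R hR
        have h1 := Finset.mem_filter.mp hR
        have h2 := Finset.mem_filter.mp h1.1
        have hss := (hPa R h2.1 h2.2).2.1
        rw [h1.2] at hss
        exact (hne R h2.1).ne_empty (Finset.eq_empty_of_ssubset_singleton hss)
      rw [hch]
      simp only [Finset.sum_empty, sub_zero, Finset.sum_singleton]
      have hrw : (∑ u : V, if ({q} : Finset V) = {u} then P u else 0)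
          = ∑ u : V, if q = u then P u else 0 :=
        Finset.sum_congr rfl (fun u _ => by
          by_cases h : q = u
          · subst h; simp
          · rw [if_neg (fun hh => h (Finset.singleton_inj.mp hh)), if_neg h])
      rw [hrw, Finset.sum_ite_eq]
      simp
    · push_neg at hQs
      have hzero : (∑ u : V, if Q = {u} then P u else 0) = 0 :=
        Finset.sum_eq_zero (fun u _ => if_neg (hQs u))
      rw [hzero, sub_eq_zero, hF', Finset.filter_filter]
      exact (sum_children F Pa hlam hsing hPa P Q hQF hQs).symm
  calc (∑ u : V, if ({u} : Finset V) ∈ U then P u else 0)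
      = ∑ u : V, ∑ Q ∈ U, (if Q = {u} then P u else 0) := by
        apply Finset.sum_congr rfl
        intro u _
        rw [Finset.sum_ite_eq' U ({u} : Finset V) (fun _ => P u)]
    _ = ∑ Q ∈ U, ∑ u : V, (if Q = {u} then P u else 0) := Finset.sum_comm
    _ = ∑ Q ∈ U, ((∑ u ∈ Q, P u)
          - (∑ R ∈ F'.filter (fun R => Pa R = Q), ∑ u ∈ R, P u)) :=
        Finset.sum_congr rfl (fun Q hQ => (perQ Q hQ).symm)
    _ = (∑ Q ∈ U, ∑ u ∈ Q, P u)
          - ∑ Q ∈ U, ∑ R ∈ F'.filter (fun R => Pa R = Q), ∑ u ∈ R, P u :=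
        Finset.sum_sub_distrib _ _
    _ = ∑ R ∈ F', ((if R ∈ U then (1 : ℝ) else 0) - (if Pa R ∈ U then 1 else 0))
          * (∑ u ∈ R, P u) := by rw [hstep1, hterm1, hterm2]
end Ident2

section Respect
variable {V : Type} [Fintype V] [DecidableEq V]

lemma respects_of_feasible (G : SimpleGraph V) (F : Finset (Finset V)) (Pa : Finset V → Finset V)
    (hne : ∀ A ∈ F, A.Nonempty)
    (hlam : ∀ A ∈ F, ∀ B ∈ F, A ⊆ B ∨ B ⊆ A ∨ Disjoint A B)
    (hsing : ∀ v : V, ({v} : Finset V) ∈ F)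
    (hPa : ∀ S ∈ F, S ≠ Finset.univ → Pa S ∈ F ∧ S ⊂ Pa S ∧ ∀ R ∈ F, S ⊂ R → Pa S ⊆ R)
    (P : V → ℝ) (hP0 : ∑ u : V, P u = 0)
    (hfeas : ∀ R ∈ F, R ≠ Finset.univ → |∑ u ∈ R, P u| ≤ capG G R Rᶜ)
    (U : Finset (Finset V)) (hU : U ⊆ F) :
    |∑ u : V, if ({u} : Finset V) ∈ U then P u else 0| ≤ capT G F Pa U := by
  classical
  rw [sum_identity F Pa hne hlam hsing hPa P hP0 U hU, capT]
  refine le_trans (Finset.abs_sum_le_sum_abs _ _) ?_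
  apply Finset.sum_le_sum
  intro R hR
  obtain ⟨hRF, hRu⟩ := Finset.mem_filter.mp hR
  by_cases h : (R ∈ U) ↔ (Pa R ∈ U)
  · rw [if_pos h]
    have hz : ((if R ∈ U then (1 : ℝ) else 0) - (if Pa R ∈ U then 1 else 0)) = 0 := by
      by_cases h1 : R ∈ U
      · rw [if_pos h1, if_pos (h.mp h1), sub_self]
      · rw [if_neg h1, if_neg (fun h2 => h1 (h.mpr h2)), sub_self]
    rw [hz, zero_mul, abs_zero]
  · rw [if_neg h]
    have habs : |(if R ∈ U then (1 : ℝ) else 0) - (if Pa R ∈ U then 1 else 0)| = 1 := by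
      by_cases h1 : R ∈ U <;> by_cases h2 : Pa R ∈ U <;>
        simp [h1, h2] at h ⊢
    rw [abs_mul, habs, one_mul]
    exact hfeas R hRF hRu
end Respect

section Flow
variable {V : Type} [Fintype V] [DecidableEq V]

open Classical in
lemma exists_maxflow (G : SimpleGraph V) (F : Finset (Finset V)) (Pa : Finset V → Finset V)
    (hne : ∀ A ∈ F, A.Nonempty)
    (hlam : ∀ A ∈ F, ∀ B ∈ F, A ⊆ B ∨ B ⊆ A ∨ Disjoint A B)
    (huniv : Finset.univ ∈ F)
    (hsing : ∀ v : V, ({v} : Finset V) ∈ F)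
    (hPa : ∀ S ∈ F, S ≠ Finset.univ → Pa S ∈ F ∧ S ⊂ Pa S ∧ ∀ R ∈ F, S ⊂ R → Pa S ⊆ R)
    (htwo : ∀ v : V, ({v} : Finset V) ≠ Finset.univ)
    (S : Finset V) :
    ∃ P : V → ℝ, (∑ u : V, P u = 0) ∧
      (∀ R ∈ F, R ≠ Finset.univ → |∑ u ∈ R, P u| ≤ capG G R Rᶜ) ∧
      0 ≤ ∑ u ∈ S, P u ∧
      ∃ U : Finset (Finset V), U ⊆ F ∧ (∀ v ∈ S, ({v} : Finset V) ∈ U) ∧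
        (∀ v ∉ S, ({v} : Finset V) ∉ U) ∧ capT G F Pa U ≤ ∑ u ∈ S, P u := by
  classical
  set Feas : Set (V → ℝ) := {P | (∑ u : V, P u = 0) ∧
      ∀ R ∈ F, R ≠ Finset.univ → |∑ u ∈ R, P u| ≤ capG G R Rᶜ} with hFeas
  have h0 : (0 : V → ℝ) ∈ Feas := by
    constructor
    · simp
    · intro R _ _
      simp [capG_nonneg G R Rᶜ]
  have hclosed : IsClosed Feas := by
    have h1 : IsClosed {P : V → ℝ | ∑ u : V, P u = 0} := by
      apply isClosed_eq _ continuous_const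
      exact continuous_finset_sum _ (fun u _ => continuous_apply u)
    have h2 : ∀ R : Finset V, IsClosed {P : V → ℝ | |∑ u ∈ R, P u| ≤ capG G R Rᶜ} := by
      intro R
      apply isClosed_le _ continuous_const
      exact (continuous_finset_sum _ (fun u _ => continuous_apply u)).abs
    have : Feas = {P : V → ℝ | ∑ u : V, P u = 0} ∩
        ⋂ (R : Finset V), ⋂ (_ : R ∈ F ∧ R ≠ Finset.univ),
          {P : V → ℝ | |∑ u ∈ R, P u| ≤ capG G R Rᶜ} := by
      ext P
      simp only [hFeas, Set.mem_setOf_eq, Set.mem_inter_iff, Set.mem_iInter]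
      tauto
    rw [this]
    exact h1.inter (isClosed_iInter (fun R => isClosed_iInter (fun _ => h2 R)))
  have hcpt : IsCompact Feas := by
    apply IsCompact.of_isClosed_subset
      (isCompact_univ_pi (fun u : V => isCompact_Icc
        (a := -(capG G {u} ({u} : Finset V)ᶜ)) (b := capG G {u} ({u} : Finset V)ᶜ)))
      hclosed
    intro P hP u _
    have := hP.2 {u} (hsing u) (htwo u)
    rw [Finset.sum_singleton] at this
    exact Set.mem_Icc.mpr (abs_le.mp this)
  obtain ⟨P, hPF, hPmax'⟩ := hcpt.exists_isMaxOn ⟨0, h0⟩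
    ((continuous_finset_sum S (fun u _ => continuous_apply u)).continuousOn)
  have hPmax : ∀ Q ∈ Feas, ∑ u ∈ S, Q u ≤ ∑ u ∈ S, P u := fun Q hQ =>
    isMaxOn_iff.mp hPmax' Q hQ
  obtain ⟨hP0, hPfeas⟩ := hPF
  have hval0 : 0 ≤ ∑ u ∈ S, P u := by
    have := hPmax 0 h0
    simpa using this
  -- reachability
  set Step : Finset V → Finset V → Prop := fun A B =>
    (A ∈ F ∧ A ≠ Finset.univ ∧ B = Pa A ∧ (∑ u ∈ A, P u) < capG G A Aᶜ) ∨
    (B ∈ F ∧ B ≠ Finset.univ ∧ A = Pa B ∧ -(capG G B Bᶜ) < ∑ u ∈ B, P u) with hStep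
  set U : Finset (Finset V) :=
    F.filter (fun R => ∃ u ∈ S, Relation.ReflTransGen Step {u} R) with hUdef
  have hUF : U ⊆ F := Finset.filter_subset _ _
  have cross1 : ∀ (B R : Finset V), R ∈ F → R ≠ Finset.univ → ¬ B ⊆ R →
      ∀ A, Relation.ReflTransGen Step A B → A ⊆ R → (∑ u ∈ R, P u) < capG G R Rᶜ := by
    intro B R hRF hRu hBR A h
    induction h using Relation.ReflTransGen.head_induction_on with
    | refl => intro hAR; exact absurd hAR hBR
    | @head A' C hstep htail ih =>
      intro hAR
      by_cases hCR : C ⊆ R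
      · exact ih hCR
      · rcases hstep with ⟨hAF, hAu, hCPa, hlt⟩ | ⟨hCF, hCu, hAPa, hlt⟩
        · have hAR' : A' = R := by
            by_contra hne'
            exact hCR (hCPa ▸ (hPa A' hAF hAu).2.2 R hRF (ssubset_of_subset_of_ne hAR hne'))
          rw [← hAR']
          exact hlt
        · have hCA : C ⊂ A' := hAPa ▸ (hPa C hCF hCu).2.1
          exact absurd (hCA.subset.trans hAR) hCR
  have cross2 : ∀ (B R : Finset V), R ∈ F → R ≠ Finset.univ → B ⊆ R →
      ∀ A, Relation.ReflTransGen Step A B → ¬ A ⊆ R → -(capG G R Rᶜ) < ∑ u ∈ R, P u := by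
    intro B R hRF hRu hBR A h
    induction h using Relation.ReflTransGen.head_induction_on with
    | refl => intro hAR; exact absurd hBR hAR
    | @head A' C hstep htail ih =>
      intro hAR
      by_cases hCR : C ⊆ R
      · rcases hstep with ⟨hAF, hAu, hCPa, hlt⟩ | ⟨hCF, hCu, hAPa, hlt⟩
        · have : A' ⊆ R := ((hPa A' hAF hAu).2.1.subset.trans (hCPa ▸ hCR))
          exact absurd this hAR
        · have hCReq : C = R := by
            by_contra hne'
            exact hAR (hAPa ▸ (hPa C hCF hCu).2.2 R hRF (ssubset_of_subset_of_ne hCR hne'))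
          rw [← hCReq]
          exact hlt
      · exact ih hCR
  have hin : ∀ v ∈ S, ({v} : Finset V) ∈ U := by
    intro v hv
    rw [hUdef, Finset.mem_filter]
    exact ⟨hsing v, v, hv, Relation.ReflTransGen.refl⟩
  have hout : ∀ v, v ∉ S → ({v} : Finset V) ∉ U := by
    intro v hv hmem
    rw [hUdef, Finset.mem_filter] at hmem
    obtain ⟨-, u, hu, hreach⟩ := hmem
    have huv : u ≠ v := fun h => hv (h ▸ hu)
    -- slack
    set T : Finset (Finset V) := F.filter (fun R => R ≠ Finset.univ ∧
      ((u ∈ R ∧ v ∉ R) ∨ (v ∈ R ∧ u ∉ R))) with hT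
    set slack : Finset V → ℝ := fun R =>
      if u ∈ R then capG G R Rᶜ - (∑ x ∈ R, P x) else (∑ x ∈ R, P x) + capG G R Rᶜ
      with hslack
    have hTmem : ({u} : Finset V) ∈ T := by
      rw [hT, Finset.mem_filter]
      exact ⟨hsing u, htwo u, Or.inl ⟨Finset.mem_singleton_self u,
        fun h => huv (Finset.mem_singleton.mp h).symm⟩⟩
    have hpos : ∀ R ∈ T, 0 < slack R := by
      intro R hR
      rw [hT, Finset.mem_filter] at hR
      obtain ⟨hRF, hRu, hsep⟩ := hR
      rcases hsep with ⟨hu', hv'⟩ | ⟨hv', hu'⟩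
      · rw [hslack]
        simp only [if_pos hu']
        have := cross1 {v} R hRF hRu
          (fun h => hv' (h (Finset.mem_singleton_self v))) {u} hreach
          (Finset.singleton_subset_iff.mpr hu')
        linarith
      · rw [hslack]
        simp only [if_neg hu']
        have := cross2 {v} R hRF hRu
          (Finset.singleton_subset_iff.mpr hv') {u} hreach
          (fun h => hu' (h (Finset.mem_singleton_self u)))
        linarith
    obtain ⟨R0, hR0T, hR0min⟩ := Finset.exists_min_image T slack ⟨{u}, hTmem⟩
    set ε : ℝ := slack R0 with hε
    have hεpos : 0 < ε := hpos R0 hR0T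
    set P' : V → ℝ := fun x => P x + (if x = u then ε else 0) - (if x = v then ε else 0)
      with hP'
    have hsumP' : ∀ R : Finset V, (∑ x ∈ R, P' x) = (∑ x ∈ R, P x)
        + (if u ∈ R then ε else 0) - (if v ∈ R then ε else 0) := by
      intro R
      rw [hP']
      rw [Finset.sum_sub_distrib, Finset.sum_add_distrib]
      congr 1
      · congr 1
        rw [Finset.sum_ite_eq' R u (fun _ => ε)]
      · rw [Finset.sum_ite_eq' R v (fun _ => ε)]
    have hP'F : P' ∈ Feas := by
      constructor
      · rw [show (∑ x : V, P' x) = ∑ x ∈ (Finset.univ : Finset V), P' x from rfl,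
          hsumP' Finset.univ]
        simp [hP0]
      · intro R hRF hRu
        have hfR := hPfeas R hRF hRu
        rw [abs_le] at hfR
        rw [hsumP' R, abs_le]
        by_cases hu' : u ∈ R <;> by_cases hv' : v ∈ R
        · simp only [if_pos hu', if_pos hv']
          constructor <;> linarith
        · -- u ∈ R, v ∉ R : ε ≤ slack R = cap - sum
          have hRT : R ∈ T := by
            rw [hT, Finset.mem_filter]
            exact ⟨hRF, hRu, Or.inl ⟨hu', hv'⟩⟩
          have := hR0min R hRT
          rw [hslack] at this
          simp only [if_pos hu'] at this
          simp only [if_pos hu', if_neg hv']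
          constructor <;> linarith [hεpos]
        · have hRT : R ∈ T := by
            rw [hT, Finset.mem_filter]
            exact ⟨hRF, hRu, Or.inr ⟨hv', hu'⟩⟩
          have := hR0min R hRT
          rw [hslack] at this
          simp only [if_neg hu'] at this
          simp only [if_neg hu', if_pos hv']
          constructor <;> linarith [hεpos]
        · simp only [if_neg hu', if_neg hv']
          constructor <;> linarith
    have : (∑ x ∈ S, P' x) ≤ ∑ x ∈ S, P x := hPmax P' hP'F
    rw [hsumP' S] at this
    rw [if_pos hu, if_neg hv] at this
    linarith
  -- saturation and capT value
  refine ⟨P, hP0, hPfeas, hval0, U, hUF, hin, hout, ?_⟩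
  have hsat1 : ∀ R ∈ F, R ≠ Finset.univ → R ∈ U → Pa R ∉ U →
      (∑ u ∈ R, P u) = capG G R Rᶜ := by
    intro R hRF hRu hRU hPaU
    have hle := (abs_le.mp (hPfeas R hRF hRu)).2
    rcases eq_or_lt_of_le hle with h | h
    · exact h
    · exfalso
      rw [hUdef, Finset.mem_filter] at hRU
      obtain ⟨-, u, hu, hreach⟩ := hRU
      apply hPaU
      rw [hUdef, Finset.mem_filter]
      exact ⟨(hPa R hRF hRu).1, u, hu, hreach.tail (Or.inl ⟨hRF, hRu, rfl, h⟩)⟩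
  have hsat2 : ∀ R ∈ F, R ≠ Finset.univ → R ∉ U → Pa R ∈ U →
      (∑ u ∈ R, P u) = -(capG G R Rᶜ) := by
    intro R hRF hRu hRU hPaU
    have hle := (abs_le.mp (hPfeas R hRF hRu)).1
    rcases eq_or_lt_of_le hle with h | h
    · exact h.symm
    · exfalso
      rw [hUdef, Finset.mem_filter] at hPaU
      obtain ⟨-, u, hu, hreach⟩ := hPaU
      apply hRU
      rw [hUdef, Finset.mem_filter]
      exact ⟨hRF, u, hu, hreach.tail (Or.inr ⟨hRF, hRu, rfl, h⟩)⟩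
  have hid := sum_identity F Pa hne hlam hsing hPa P hP0 U hUF
  have hcapTval : capT G F Pa U = ∑ u : V, if ({u} : Finset V) ∈ U then P u else 0 := by
    rw [hid, capT]
    apply Finset.sum_congr rfl
    intro R hR
    obtain ⟨hRF, hRu⟩ := Finset.mem_filter.mp hR
    by_cases h1 : R ∈ U <;> by_cases h2 : Pa R ∈ U
    · rw [if_pos (iff_of_true h1 h2), if_pos h1, if_pos h2, sub_self, zero_mul]
    · rw [if_neg (fun h => h2 (h.mp h1)), if_pos h1, if_neg h2, sub_zero, one_mul,
        hsat1 R hRF hRu h1 h2]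
    · rw [if_neg (fun h => h1 (h.mpr h2)), if_neg h1, if_pos h2, zero_sub,
        hsat2 R hRF hRu h1 h2]
      ring
    · rw [if_pos (iff_of_false h1 h2), if_neg h1, if_neg h2, sub_self, zero_mul]
  rw [hcapTval]
  have : (∑ u : V, if ({u} : Finset V) ∈ U then P u else 0)
      = ∑ u : V, if u ∈ S then P u else 0 := by
    apply Finset.sum_congr rfl
    intro u _
    by_cases hu : u ∈ S
    · rw [if_pos (hin u hu), if_pos hu]
    · rw [if_neg (hout u hu), if_neg hu]
  rw [this, ← Finset.sum_filter, Finset.filter_univ_mem]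
end Flow


/- `mincutT G F Pa S` : the minimum over all `U ⊆ F` containing the singletons of
`S` and avoiding the singletons of `Sᶜ` of the tree cut weight `capT G F Pa U`. -/
open Classical in
noncomputable def mincutT {V : Type} [Fintype V] [DecidableEq V] (G : SimpleGraph V)
    (F : Finset (Finset V)) (Pa : Finset V → Finset V) (S : Finset V) : ℝ :=
  sInf {x : ℝ | ∃ U : Finset (Finset V), U ⊆ F ∧
    (∀ v ∈ S, ({v} : Finset V) ∈ U) ∧ (∀ v ∉ S, ({v} : Finset V) ∉ U) ∧
    x = capT G F Pa U}

/-- If `G` `(1/α)`-respects every valid demand state that is `1`-respected by the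
hierarchical-decomposition tree `T` given by the laminar family `F` (with parent
function `Pa`), then `T` is a cut-sparsifier of `G` of quality `α`. -/
theorem respecting_demand_states_implies_cut_sparsifier
    {V : Type} [Fintype V] [DecidableEq V] (G : SimpleGraph V)
    (F : Finset (Finset V)) (Pa : Finset V → Finset V) (α : ℝ) (hα : 1 ≤ α)
    (hne : ∀ A ∈ F, A.Nonempty)
    (hlam : ∀ A ∈ F, ∀ B ∈ F, A ⊆ B ∨ B ⊆ A ∨ Disjoint A B)
    (huniv : Finset.univ ∈ F)
    (hsing : ∀ v : V, ({v} : Finset V) ∈ F)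
    (hPa : ∀ S ∈ F, S ≠ Finset.univ →
      Pa S ∈ F ∧ S ⊂ Pa S ∧ ∀ R ∈ F, S ⊂ R → Pa S ⊆ R)
    (hresp : ∀ (K : Type) [Fintype K] (P : V → K → ℝ),
      (∀ k : K, ∑ u : V, P u k = 0) →
      (∀ U : Finset (Finset V), U ⊆ F → U.Nonempty → (F \ U).Nonempty →
        (∑ k : K, |∑ u : V, if ({u} : Finset V) ∈ U then P u k else 0|)
          ≤ capT G F Pa U) →
      ∀ S : Finset V, S.Nonempty → S ≠ Finset.univ →
        (1 / α) * (∑ k : K, |∑ u ∈ S, P u k|) ≤ capG G S Sᶜ) :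
    ∀ S : Finset V, S.Nonempty → S ≠ Finset.univ →
      capG G S Sᶜ ≤ mincutT G F Pa S ∧ mincutT G F Pa S ≤ α * capG G S Sᶜ := by
  intro S hS hSu
  classical
  have htwo : ∀ v : V, ({v} : Finset V) ≠ Finset.univ := by
    intro v h
    obtain ⟨a, ha⟩ := hS
    obtain ⟨b, hb⟩ : ∃ b, b ∉ S := by
      by_contra hb
      push_neg at hb
      exact hSu (Finset.eq_univ_iff_forall.mpr hb)
    have hav : a = v := Finset.mem_singleton.mp (h ▸ Finset.mem_univ a)
    have hbv : b = v := Finset.mem_singleton.mp (h ▸ Finset.mem_univ b)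
    exact hb ((hbv.trans hav.symm) ▸ ha)
  have hcs : mincutT G F Pa S = sInf {x : ℝ | ∃ U : Finset (Finset V), U ⊆ F ∧
      (∀ v ∈ S, ({v} : Finset V) ∈ U) ∧ (∀ v ∉ S, ({v} : Finset V) ∉ U) ∧
      x = capT G F Pa U} := rfl
  have hcs_ne : {x : ℝ | ∃ U : Finset (Finset V), U ⊆ F ∧
      (∀ v ∈ S, ({v} : Finset V) ∈ U) ∧ (∀ v ∉ S, ({v} : Finset V) ∉ U) ∧
      x = capT G F Pa U}.Nonempty := by
    refine ⟨capT G F Pa (S.image (fun v => ({v} : Finset V))),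
      S.image (fun v => ({v} : Finset V)), ?_, ?_, ?_, rfl⟩
    · intro R hR
      obtain ⟨v, hv, rfl⟩ := Finset.mem_image.mp hR
      exact hsing v
    · intro v hv
      exact Finset.mem_image_of_mem _ hv
    · intro v hv hmem
      obtain ⟨w, hw, hwv⟩ := Finset.mem_image.mp hmem
      exact hv ((Finset.singleton_inj.mp hwv) ▸ hw)
  have hbdd : BddBelow {x : ℝ | ∃ U : Finset (Finset V), U ⊆ F ∧
      (∀ v ∈ S, ({v} : Finset V) ∈ U) ∧ (∀ v ∉ S, ({v} : Finset V) ∉ U) ∧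
      x = capT G F Pa U} := by
    refine ⟨0, ?_⟩
    rintro x ⟨U, -, -, -, rfl⟩
    exact capT_nonneg G F Pa U
  constructor
  · rw [hcs]
    apply le_csInf hcs_ne
    rintro x ⟨U, hUF, hin', hout', rfl⟩
    exact capG_le_capT G F Pa hlam huniv hsing hPa S U hin' hout'
  · obtain ⟨P, hP0, hPfeas, hval0, U, hUF, hin', hout', hcaple⟩ :=
      exists_maxflow G F Pa hne hlam huniv hsing hPa htwo S
    have h1 : mincutT G F Pa S ≤ capT G F Pa U := by
      rw [hcs]
      exact csInf_le hbdd ⟨U, hUF, hin', hout', rfl⟩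
    have hrespP := hresp Unit (fun u _ => P u) (fun _ => hP0) (by
      intro U' hU'F _ _
      have hu : (∑ k : Unit, |∑ u : V, if ({u} : Finset V) ∈ U' then P u else 0|)
          = |∑ u : V, if ({u} : Finset V) ∈ U' then P u else 0| := by simp
      rw [hu]
      exact respects_of_feasible G F Pa hne hlam hsing hPa P hP0 hPfeas U' hU'F) S hS hSu
    have hα0 : (0 : ℝ) < α := lt_of_lt_of_le one_pos hα
    have hsum : (∑ k : Unit, |∑ u ∈ S, P u|) = ∑ u ∈ S, P u := by
      simp [abs_of_nonneg hval0]
    rw [hsum] at hrespP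
    have h2 : (∑ u ∈ S, P u) ≤ α * capG G S Sᶜ := by
      have := mul_le_mul_of_nonneg_left hrespP hα0.le
      rw [← mul_assoc, mul_one_div_cancel hα0.ne', one_mul] at this
      exact this
    linarith
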